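/- arXiv:2205.01635 — 9 statements merged into one kernel-verified Lean document; each statement's English description precedes it below -/
import Mathlib

section
/- If X is a metric space, R ≥ 0, and U₁,…,Uₙ are subsets of a subset U ⊆ X forming a coarse cover of U (i.e., for every entourage E ⊆ U×U the set E[U₁ᶜ] ∩ ⋯ ∩ E[Uₙᶜ] is bounded), then for every q ≥ 0 the set (U₁^{q+1} ∪ ⋯ ∪ Uₙ^{q+1})ᶜ ∩ Δ_R^q is bounded, where Δ_R^q = {(x₀,…,x_q) ∈ U^{q+1} : d(x_i,x_j) ≤ R for all i,j} and a subset of U^{q+1} is bounded if its projection to each factor is bounded in X. -/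
/-- A subset of a power `U^{k}` (tuples) is bounded if its projection to each factor
is metrically bounded. -/
def TupleBounded {X : Type*} [MetricSpace X] {k : ℕ} (C : Set (Fin k → X)) : Prop :=
  ∀ i : Fin k, Bornology.IsBounded ((fun f => f i) '' C)

/-- The set of `q`-simplices of the `R`-Vietoris-Rips complex. -/
def simplexSet (X : Type*) [MetricSpace X] (k : ℕ) (R : ℝ) : Set (Fin k → X) :=
  {f | ∀ i j, dist (f i) (f j) ≤ R}

/-- If `U₁,…,Uₙ ⊆ U` form a coarse cover of `U` (for every entourage `E ⊆ U×U` the set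
`E[U₁ᶜ] ∩ ⋯ ∩ E[Uₙᶜ]` is bounded, complements in `U`), then for every `R ≥ 0` and `q ≥ 0`
the set `(U₁^{q+1} ∪ ⋯ ∪ Uₙ^{q+1})ᶜ ∩ Δ_R^q` is bounded. -/
theorem stmt0 {X : Type*} [MetricSpace X] (U : Set X) (n : ℕ) (Us : Fin n → Set X)
    (hsub : ∀ i, Us i ⊆ U)
    (hcover : ∀ E : Set (X × X), E ⊆ U ×ˢ U →
      (∃ S : ℝ, ∀ p ∈ E, dist p.1 p.2 ≤ S) →
      Bornology.IsBounded (U ∩ ⋂ i, {x : X | ∃ y ∈ U \ Us i, (x, y) ∈ E}))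
    (R : ℝ) (hR : 0 ≤ R) (q : ℕ) :
    TupleBounded ({f : Fin (q+1) → X | (∀ k, f k ∈ U) ∧ ∀ i, ∃ k, f k ∉ Us i}
      ∩ simplexSet X (q+1) R) := by
  intro j
  set E : Set (X × X) := {p | p.1 ∈ U ∧ p.2 ∈ U ∧ dist p.1 p.2 ≤ R} with hEdef
  have hB := hcover E (fun p hp => ⟨hp.1, hp.2.1⟩) ⟨R, fun p hp => hp.2.2⟩
  apply (hB.cthickening (δ := R)).subset
  rintro x ⟨f, ⟨⟨hU, hmiss⟩, hsimp⟩, rfl⟩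
  refine Metric.mem_cthickening_of_dist_le (f j) (f 0) R _ ?_ (hsimp j 0)
  refine ⟨hU 0, ?_⟩
  simp only [Set.mem_iInter, Set.mem_setOf_eq]
  intro i
  obtain ⟨k, hk⟩ := hmiss i
  exact ⟨f k, ⟨hU k, hk⟩, hU 0, hU k, hsimp 0 k⟩
end

section
/- Let X be a metric space, A an abelian group, q ≥ 0, and let φ : X^{q+1} → A be a function constant on each block A_{i₀} × ⋯ × A_{i_q} for a finite partition X = A₁ ⊔ ⋯ ⊔ Aₙ, such that φ has cocontrolled support and dφ = 0 (φ is a cocycle for the simplicial coboundary d). Then there exist finitely many subsets V₁,…,V_m ⊆ X forming a coarse cover of X such that the restriction of φ to V_j^{q+1} is identically zero for every j. (Each V_j can be taken to be a union of some of the blocks A_i.) -/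
def Cocontrolled {X : Type*} [MetricSpace X] {k : ℕ} (C : Set (Fin k → X)) : Prop :=
  ∀ R : ℝ, 0 ≤ R → TupleBounded (C ∩ simplexSet X k R)

/-- The simplicial coboundary. -/
def cob {X A : Type*} [AddCommGroup A] {k : ℕ} (φ : (Fin (k+1) → X) → A) :
    (Fin (k+2) → X) → A :=
  fun x => ∑ i : Fin (k+2), (-1:ℤ)^(i : ℕ) • φ (x ∘ i.succAbove)

/-- If `φ : X^{q+1} → A` is blocky with respect to a finite partition (classified by
`ι : X → Fin n`), has cocontrolled support and is a cocycle, then there are finitely many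
subsets `V₁,…,V_m` coarsely covering `X` with `φ` vanishing on each `V_j^{q+1}`; moreover
each `V_j` is a union of blocks. -/
theorem stmt2 {X A : Type*} [MetricSpace X] [AddCommGroup A] (q n : ℕ) (ι : X → Fin n)
    (φ : (Fin (q+1) → X) → A)
    (hblocky : ∀ f g : Fin (q+1) → X, (∀ k, ι (f k) = ι (g k)) → φ f = φ g)
    (hsupp : Cocontrolled {f : Fin (q+1) → X | φ f ≠ 0})
    (hcocycle : cob φ = 0) :
    ∃ (m : ℕ) (V : Fin m → Set X),
      (∀ R : ℝ, 0 ≤ R →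
        Bornology.IsBounded (⋂ j, {x : X | ∃ y ∈ (V j)ᶜ, dist x y ≤ R})) ∧
      (∀ j, ∀ f : Fin (q+1) → X, (∀ k, f k ∈ V j) → φ f = 0) ∧
      (∀ j, ∃ S : Set (Fin n), V j = ⋃ i ∈ S, ι ⁻¹' {i}) := by
  classical
  -- `Good S` : φ vanishes on all tuples whose blocks lie in `S`.
  set Good : Finset (Fin n) → Prop :=
    fun S => ∀ f : Fin (q+1) → X, (∀ k, ι (f k) ∈ S) → φ f = 0 with hGood
  set W : Finset (Fin n) → Set X :=
    fun S => if Good S then ⋃ i ∈ S, ι ⁻¹' {i} else ∅ with hW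
  let e := Fintype.equivFin (Finset (Fin n))
  refine ⟨Fintype.card (Finset (Fin n)), fun j => W (e.symm j), ?_, ?_, ?_⟩
  · intro R hR
    have hb : Bornology.IsBounded ((fun f => f (0 : Fin (q+1))) ''
        ({f : Fin (q+1) → X | φ f ≠ 0} ∩ simplexSet X (q+1) (2*R))) :=
      hsupp (2*R) (by linarith) 0
    refine (hb.cthickening (δ := R)).subset ?_
    intro x hx
    simp only [Set.mem_iInter, Set.mem_setOf_eq] at hx
    -- the set of blocks meeting the closed ball of radius R around x
    set S₀ : Finset (Fin n) :=
      Finset.univ.filter (fun i => ∃ y : X, dist x y ≤ R ∧ ι y = i) with hS₀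
    have hbad : ¬ Good S₀ := by
      intro hg
      obtain ⟨y, hyc, hyd⟩ := hx (e S₀)
      apply hyc
      have hws : W S₀ = ⋃ i ∈ S₀, ι ⁻¹' {i} := by
        simp only [hW]; rw [if_pos hg]
      simp only [Equiv.symm_apply_apply, hws]
      refine Set.mem_biUnion ?_ rfl
      exact Finset.mem_filter.mpr ⟨Finset.mem_univ _, ⟨y, hyd, rfl⟩⟩
    obtain ⟨f, hf, hfne⟩ : ∃ f : Fin (q+1) → X, (∀ k, ι (f k) ∈ S₀) ∧ φ f ≠ 0 := by
      by_contra h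
      push_neg at h
      exact hbad (fun f hf => h f hf)
    have hmem : ∀ k, ∃ y : X, dist x y ≤ R ∧ ι y = ι (f k) := by
      intro k
      exact (Finset.mem_filter.mp (hf k)).2
    choose g hg1 hg2 using hmem
    have hφg : φ g ≠ 0 := by
      rw [hblocky g f (fun k => hg2 k)]; exact hfne
    have hsimp : g ∈ simplexSet X (q+1) (2*R) := by
      intro i j
      calc dist (g i) (g j) ≤ dist (g i) x + dist x (g j) := dist_triangle _ _ _
        _ ≤ R + R := by
            have := hg1 i
            have := hg1 j
            rw [dist_comm] at *
            gcongr <;> [exact (dist_comm x (g i) ▸ hg1 i); exact hg1 j]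
        _ = 2*R := by ring
    have hg0 : g 0 ∈ (fun f => f (0 : Fin (q+1))) ''
        ({f : Fin (q+1) → X | φ f ≠ 0} ∩ simplexSet X (q+1) (2*R)) :=
      ⟨g, ⟨hφg, hsimp⟩, rfl⟩
    exact Metric.mem_cthickening_of_dist_le x (g 0) R _ hg0 (hg1 0)
  · intro j f hf
    by_cases hg : Good (e.symm j)
    · apply hg
      intro k
      have := hf k
      rw [hW] at this; simp only at this; rw [if_pos hg] at this
      obtain ⟨_, ⟨i, rfl⟩, hmem⟩ := this
      simp only [Set.mem_iUnion, Set.mem_preimage, Set.mem_singleton_iff] at hmem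
      obtain ⟨hi, hik⟩ := hmem
      rw [hik]; exact hi
    · exfalso
      have := hf 0
      rw [hW] at this; simp only at this; rw [if_neg hg] at this
      exact this
  · intro j
    by_cases hg : Good (e.symm j)
    · exact ⟨(e.symm j : Set (Fin n)), by rw [hW]; simp only; rw [if_pos hg]; exact (Finset.set_biUnion_coe _ _).symm⟩
    · exact ⟨∅, by rw [hW]; simp only; rw [if_neg hg]; simp⟩
end

section
/- Let X and Y be metric spaces, α₀,…,α_q : X → Y coarse maps which are pairwise close, and D ⊆ Y^{q+1} a cocontrolled subset. Then the preimage (α₀ × ⋯ × α_q)^{−1}(D) is a cocontrolled subset of X^{q+1}. -/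
def CoarselyUniform {X Y : Type*} [MetricSpace X] [MetricSpace Y] (f : X → Y) : Prop :=
  ∀ R : ℝ, 0 ≤ R → ∃ S : ℝ, ∀ x y : X, dist x y ≤ R → dist (f x) (f y) ≤ S

def CoarselyProper {X Y : Type*} [MetricSpace X] [MetricSpace Y] (f : X → Y) : Prop :=
  ∀ B : Set Y, Bornology.IsBounded B → Bornology.IsBounded (f ⁻¹' B)

def Close {X Y : Type*} [MetricSpace X] [MetricSpace Y] (f g : X → Y) : Prop :=
  ∃ S : ℝ, ∀ x, dist (f x) (g x) ≤ S

/-- If `α₀,…,α_q : X → Y` are pairwise close coarse maps and `D ⊆ Y^{q+1}` is cocontrolled,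
then `(α₀ × ⋯ × α_q)⁻¹(D)` is cocontrolled in `X^{q+1}`. -/
theorem stmt5 {X Y : Type*} [MetricSpace X] [MetricSpace Y] {q : ℕ}
    (α : Fin (q+1) → (X → Y))
    (hc : ∀ i, CoarselyUniform (α i) ∧ CoarselyProper (α i))
    (hcl : ∀ i j, Close (α i) (α j))
    (D : Set (Fin (q+1) → Y)) (hD : Cocontrolled D) :
    Cocontrolled ((fun f : Fin (q+1) → X => fun i => α i (f i)) ⁻¹' D) := by
  intro R hR
  choose S hS using fun i => (hc i).1 R hR
  choose K hK using hcl
  set T : ℝ := max 0 (Finset.univ.sup' Finset.univ_nonempty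
    (fun p : Fin (q+1) × Fin (q+1) => S p.1 + K p.1 p.2)) with hTdef
  have hT0 : 0 ≤ T := le_max_left _ _
  intro i
  apply ((hc i).2 _ ((hD T hT0) i)).subset
  rintro _ ⟨f, ⟨hfD, hfS⟩, rfl⟩
  refine ⟨fun j => α j (f j), ⟨hfD, fun a b => ?_⟩, rfl⟩
  calc dist (α a (f a)) (α b (f b))
      ≤ dist (α a (f a)) (α a (f b)) + dist (α a (f b)) (α b (f b)) := dist_triangle _ _ _
    _ ≤ S a + K a b := add_le_add (hS a (f a) (f b) (hfS a b)) (hK a b (f b))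
    _ ≤ T := le_trans (Finset.le_sup' (fun p : Fin (q+1) × Fin (q+1) => S p.1 + K p.1 p.2) (Finset.mem_univ (a, b))) (le_max_right _ _)
end

section
/- Let A be a finite abelian group and let φ : (ℤ≥0)² → A be a function which is blocky (constant on blocks of a finite partition of ℤ≥0 in each coordinate) and such that dφ has cocontrolled support in (ℤ≥0)³. Then there exists a blocky function ψ : ℤ≥0 → A such that φ − dψ has cocontrolled support, where (dψ)(x,y) = ψ(y) − ψ(x). In particular ψ can be taken as ψ(x) = Σ_{i=0}^{x−1} φ(i, i+1), which takes only finitely many values since A is finite. -/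
private lemma key8 {A : Type*} [AddCommGroup A] (φ : ℕ → ℕ → A) (x : ℕ) :
    ∀ y, x ≤ y →
    φ x y - ∑ i ∈ Finset.Ico x y, φ i (i+1)
      = φ x x - ∑ i ∈ Finset.Ico x y, (φ i (i+1) - φ x (i+1) + φ x i) := by
  intro y h
  induction y, h using Nat.le_induction with
  | base => simp
  | succ y hy ih =>
    rw [Finset.sum_Ico_succ_top hy, Finset.sum_Ico_succ_top hy]
    calc φ x (y+1) - (∑ i ∈ Finset.Ico x y, φ i (i+1) + φ y (y+1))
        = (φ x y - ∑ i ∈ Finset.Ico x y, φ i (i+1))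
          + (φ x (y+1) - φ x y - φ y (y+1)) := by abel
      _ = (φ x x - ∑ i ∈ Finset.Ico x y, (φ i (i+1) - φ x (i+1) + φ x i))
          + (φ x (y+1) - φ x y - φ y (y+1)) := by rw [ih]
      _ = _ := by abel

/-- Let `A` be a finite abelian group and `φ : (ℤ≥0)² → A` blocky with `dφ` having
cocontrolled support.  Then `ψ(x) = Σ_{i<x} φ(i,i+1)` is blocky (finitely many values),
and `φ − dψ` has cocontrolled support. -/
theorem stmt8 {A : Type*} [AddCommGroup A] [Fintype A] (φ : ℕ → ℕ → A)
    (n : ℕ) (ι : ℕ → Fin n)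
    (hblocky : ∀ x y x' y', ι x = ι x' → ι y = ι y' → φ x y = φ x' y')
    (hcc : ∀ R : ℕ, {p : ℕ × ℕ × ℕ |
        φ p.2.1 p.2.2 - φ p.1 p.2.2 + φ p.1 p.2.1 ≠ 0 ∧
        |(p.1 : ℤ) - (p.2.1 : ℤ)| ≤ (R : ℤ) ∧ |(p.1 : ℤ) - (p.2.2 : ℤ)| ≤ (R : ℤ) ∧
        |(p.2.1 : ℤ) - (p.2.2 : ℤ)| ≤ (R : ℤ)}.Finite) :
    ∃ ψ : ℕ → A,
      (∃ (m : ℕ) (κ : ℕ → Fin m), ∀ x x', κ x = κ x' → ψ x = ψ x') ∧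
      (∀ R : ℕ, {p : ℕ × ℕ |
          φ p.1 p.2 - (ψ p.2 - ψ p.1) ≠ 0 ∧ |(p.1 : ℤ) - (p.2 : ℤ)| ≤ (R : ℤ)}.Finite) ∧
      ψ = fun x => ∑ i ∈ Finset.range x, φ i (i+1) := by
  classical
  refine ⟨fun x => ∑ i ∈ Finset.range x, φ i (i+1),
    ⟨Fintype.card A, fun x => Fintype.equivFin A (∑ i ∈ Finset.range x, φ i (i+1)),
      fun x x' h => (Fintype.equivFin A).injective h⟩, ?_, rfl⟩
  intro R
  set T : ℕ → Set (ℕ × ℕ × ℕ) := fun r => {p : ℕ × ℕ × ℕ |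
        φ p.2.1 p.2.2 - φ p.1 p.2.2 + φ p.1 p.2.1 ≠ 0 ∧
        |(p.1 : ℤ) - (p.2.1 : ℤ)| ≤ (r : ℤ) ∧ |(p.1 : ℤ) - (p.2.2 : ℤ)| ≤ (r : ℤ) ∧
        |(p.2.1 : ℤ) - (p.2.2 : ℤ)| ≤ (r : ℤ)} with hTdef
  have hT : ∀ r, (T r).Finite := hcc
  have hmem : ∀ (r : ℕ) (p : ℕ × ℕ × ℕ),
      (φ p.2.1 p.2.2 - φ p.1 p.2.2 + φ p.1 p.2.1 ≠ 0) →
      (|(p.1 : ℤ) - (p.2.1 : ℤ)| ≤ (r : ℤ)) → (|(p.1 : ℤ) - (p.2.2 : ℤ)| ≤ (r : ℤ)) →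
      (|(p.2.1 : ℤ) - (p.2.2 : ℤ)| ≤ (r : ℤ)) → p ∈ T r := by
    intro r p h1 h2 h3 h4
    rw [hTdef]
    exact ⟨h1, h2, h3, h4⟩
  have hF : (Prod.fst '' (T 0 ∪ T (R+1) ∪ T R)).Finite :=
    (((hT 0).union (hT (R+1))).union (hT R)).image _
  obtain ⟨N, hN⟩ := hF.bddAbove
  apply Set.Finite.subset ((Set.finite_Iic (N+R)).prod (Set.finite_Iic (N+R)))
  rintro ⟨x, y⟩ ⟨hne, hd⟩
  rw [abs_le] at hd
  have hne2 : φ x y - ((∑ i ∈ Finset.range y, φ i (i+1))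
      - ∑ i ∈ Finset.range x, φ i (i+1)) ≠ 0 := hne
  have claim : x ∈ Prod.fst '' (T 0 ∪ T (R+1) ∪ T R)
      ∨ y ∈ Prod.fst '' (T 0 ∪ T (R+1) ∪ T R) := by
    rcases le_total x y with hxy | hxy
    · have hsum : (∑ i ∈ Finset.range y, φ i (i+1)) - ∑ i ∈ Finset.range x, φ i (i+1)
          = ∑ i ∈ Finset.Ico x y, φ i (i+1) := (Finset.sum_Ico_eq_sub _ hxy).symm
      have hne3 : φ x x - ∑ i ∈ Finset.Ico x y, (φ i (i+1) - φ x (i+1) + φ x i) ≠ 0 := by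
        rw [← key8 φ x y hxy]
        rw [hsum] at hne2
        exact hne2
      by_cases hxx : φ x x = 0
      · have hex : ∃ i ∈ Finset.Ico x y, φ i (i+1) - φ x (i+1) + φ x i ≠ 0 := by
          by_contra hcon
          push_neg at hcon
          exact hne3 (by rw [Finset.sum_eq_zero hcon, hxx, sub_zero])
        obtain ⟨i, hi, hEi⟩ := hex
        rw [Finset.mem_Ico] at hi
        left
        refine ⟨(x, i, i+1), Set.mem_union_left _ (Set.mem_union_right _ ?_), rfl⟩
        refine hmem (R+1) (x, i, i+1) hEi ?_ ?_ ?_ <;>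
          · rw [abs_le]; push_cast; omega
      · left
        refine ⟨(x, x, x), Set.mem_union_left _ (Set.mem_union_left _ ?_), rfl⟩
        refine hmem 0 (x, x, x) (by simpa using hxx) ?_ ?_ ?_ <;> simp
    · have hsum : (∑ i ∈ Finset.range x, φ i (i+1)) - ∑ i ∈ Finset.range y, φ i (i+1)
          = ∑ i ∈ Finset.Ico y x, φ i (i+1) := (Finset.sum_Ico_eq_sub _ hxy).symm
      have h := key8 φ y x hxy
      have hexpr : φ x y - ((∑ i ∈ Finset.range y, φ i (i+1))
            - ∑ i ∈ Finset.range x, φ i (i+1))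
          = (φ y x - φ x x + φ x y) + φ x x - φ y y
            + ∑ i ∈ Finset.Ico y x, (φ i (i+1) - φ y (i+1) + φ y i) := by
        calc φ x y - ((∑ i ∈ Finset.range y, φ i (i+1)) - ∑ i ∈ Finset.range x, φ i (i+1))
            = φ x y + ((∑ i ∈ Finset.range x, φ i (i+1))
              - ∑ i ∈ Finset.range y, φ i (i+1)) := by abel
          _ = φ x y + ∑ i ∈ Finset.Ico y x, φ i (i+1) := by rw [hsum]
          _ = φ x y + ∑ i ∈ Finset.Ico y x, φ i (i+1)
              + ((φ y x - ∑ i ∈ Finset.Ico y x, φ i (i+1))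
                - (φ y y - ∑ i ∈ Finset.Ico y x, (φ i (i+1) - φ y (i+1) + φ y i))) := by
              rw [h]; abel
          _ = _ := by abel
      rw [hexpr] at hne2
      by_cases h1 : φ y x - φ x x + φ x y = 0
      · by_cases h2 : φ x x = 0
        · by_cases h3 : φ y y = 0
          · have hex : ∃ i ∈ Finset.Ico y x, φ i (i+1) - φ y (i+1) + φ y i ≠ 0 := by
              by_contra hcon
              push_neg at hcon
              apply hne2
              rw [Finset.sum_eq_zero hcon, h1, h2, h3]
              abel
            obtain ⟨i, hi, hEi⟩ := hex
            rw [Finset.mem_Ico] at hi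
            right
            refine ⟨(y, i, i+1), Set.mem_union_left _ (Set.mem_union_right _ ?_), rfl⟩
            refine hmem (R+1) (y, i, i+1) hEi ?_ ?_ ?_ <;>
              · rw [abs_le]; push_cast; omega
          · right
            refine ⟨(y, y, y), Set.mem_union_left _ (Set.mem_union_left _ ?_), rfl⟩
            refine hmem 0 (y, y, y) (by simpa using h3) ?_ ?_ ?_ <;> simp
        · left
          refine ⟨(x, x, x), Set.mem_union_left _ (Set.mem_union_left _ ?_), rfl⟩
          refine hmem 0 (x, x, x) (by simpa using h2) ?_ ?_ ?_ <;> simp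
      · left
        refine ⟨(x, y, x), Set.mem_union_right _ ?_, rfl⟩
        refine hmem R (x, y, x) h1 ?_ ?_ ?_ <;>
          · rw [abs_le]; push_cast; omega
  rcases claim with h | h <;> have hb := hN h <;>
    exact ⟨by simp only [Set.mem_Iic]; omega, by simp only [Set.mem_Iic]; omega⟩
end

section
/- Let X be a metric space and let U₁, U₂, A ⊆ X be subsets. If U₁,…,Uₙ is a coarse cover of X then there exists a coarse cover V₁,…,Vₙ of X with V_i not close to U_iᶜ for every i (i.e., V_i and U_iᶜ are coarsely disjoint: for every R ≥ 0, Δ_R[V_i] ∩ Δ_R[U_iᶜ] is bounded). -/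
/-- Auxiliary increasing sequence used in the proof of `stmt9`. -/
noncomputable def stmt9Seq (ρ : ℕ → ℝ) : ℕ → ℝ
  | 0 => 0
  | k + 1 => max (stmt9Seq ρ k + 1) (ρ (2 * (k + 1)) + (k + 1))

lemma stmt9Seq_succ_ge_left (ρ : ℕ → ℝ) (k : ℕ) :
    stmt9Seq ρ k + 1 ≤ stmt9Seq ρ (k + 1) := le_max_left _ _

lemma stmt9Seq_succ_ge_right (ρ : ℕ → ℝ) (k : ℕ) :
    ρ (2 * (k + 1)) + (k + 1) ≤ stmt9Seq ρ (k + 1) := le_max_right _ _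

lemma stmt9Seq_mono (ρ : ℕ → ℝ) : Monotone (stmt9Seq ρ) := by
  apply monotone_nat_of_le_succ
  intro k
  have := stmt9Seq_succ_ge_left ρ k
  linarith

/-- If `U₁,…,Uₙ` is a coarse cover of `X` then there is a coarse cover `V₁,…,Vₙ` of `X`
with each `V_i` coarsely disjoint from `U_iᶜ`. -/
theorem stmt9 {X : Type*} [MetricSpace X] (n : ℕ) (U : Fin n → Set X)
    (hcover : ∀ R : ℝ, 0 ≤ R →
      Bornology.IsBounded (⋂ i, {x : X | ∃ y ∈ (U i)ᶜ, dist x y ≤ R})) :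
    ∃ V : Fin n → Set X,
      (∀ R : ℝ, 0 ≤ R →
        Bornology.IsBounded (⋂ i, {x : X | ∃ y ∈ (V i)ᶜ, dist x y ≤ R})) ∧
      (∀ i, ∀ R : ℝ, 0 ≤ R →
        Bornology.IsBounded ({x : X | ∃ y ∈ V i, dist x y ≤ R} ∩
          {x : X | ∃ y ∈ (U i)ᶜ, dist x y ≤ R})) := by
  rcases isEmpty_or_nonempty X with hX | hX
  · have hb : ∀ S : Set X, Bornology.IsBounded S := fun S => by
      rw [Set.eq_empty_of_isEmpty S]; exact Bornology.isBounded_empty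
    exact ⟨U, fun R _ => hb _, fun i R _ => hb _⟩
  rcases Nat.eq_zero_or_pos n with hn | hn
  · subst hn
    exact ⟨U, hcover, fun i => i.elim0⟩
  obtain ⟨p⟩ := hX
  -- choose radii bounding the coarse intersections at natural radii
  have hD : ∀ k : ℕ, ∃ r : ℝ,
      (⋂ i, {x : X | ∃ y ∈ (U i)ᶜ, dist x y ≤ (k : ℝ)}) ⊆ Metric.closedBall p r := by
    intro k
    exact (hcover k (by positivity)).subset_closedBall p
  choose ρ hρ using hD
  set s : ℕ → ℝ := stmt9Seq ρ with hs
  -- the sets V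
  set V : Fin n → Set X :=
    fun i => {x : X | ∀ y ∈ (U i)ᶜ, ∀ k : ℕ, s k ≤ dist x p → (k : ℝ) ≤ dist x y} with hV
  refine ⟨V, ?_, ?_⟩
  · -- V coarsely covers
    intro R hR
    set K : ℕ := ⌊R⌋₊ + 1 with hK
    have hKc : (K : ℝ) = (⌊R⌋₊ : ℝ) + 1 := by rw [hK]; push_cast; ring
    have hRK : R < (K : ℝ) := by
      have := Nat.lt_floor_add_one R
      rw [hKc]; linarith
    apply Bornology.IsBounded.subset (Metric.isBounded_closedBall (x := p) (r := ρ (2 * K)))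
    intro x hx
    rw [Set.mem_iInter] at hx
    choose v hvV hxv using hx
    have hv' : ∀ i, ∃ y ∈ (U i)ᶜ, ∃ k : ℕ, s k ≤ dist (v i) p ∧ dist (v i) y < (k : ℝ) := by
      intro i
      have := hvV i
      rw [hV] at this
      simp only [Set.mem_compl_iff, Set.mem_setOf_eq, not_forall] at this
      obtain ⟨y, hy, k, hk1, hk2⟩ := this
      exact ⟨y, hy, k, hk1, lt_of_not_ge hk2⟩
    choose y hyU k hk1 hk2 using hv'
    have hne : (Finset.univ : Finset (Fin n)).Nonempty := by
      simpa [Finset.univ_nonempty_iff] using Fin.pos_iff_nonempty.mp hn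
    obtain ⟨j, _, hj⟩ := Finset.exists_mem_eq_sup Finset.univ hne k
    set m : ℕ := Finset.univ.sup k with hm
    have hkm : ∀ i, k i ≤ m := fun i => Finset.le_sup (Finset.mem_univ i)
    have hsm : s m ≤ R + dist x p := by
      have h1 : s m ≤ dist (v j) p := hj ▸ hk1 j
      have h2 : dist (v j) p ≤ dist (v j) x + dist x p := dist_triangle _ _ _
      have h3 : dist (v j) x ≤ R := by rw [dist_comm]; exact hxv j
      linarith
    -- x is within R + k i of (U i)ᶜ
    have hxU : ∀ i, ∃ z ∈ (U i)ᶜ, dist x z ≤ R + (k i : ℝ) := by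
      intro i
      refine ⟨y i, hyU i, ?_⟩
      have := dist_triangle x (v i) (y i)
      have := hk2 i
      have := hxv i
      linarith
    by_cases hmK : m ≤ K
    · -- x ∈ D (2K)
      have hx2K : x ∈ ⋂ i, {x : X | ∃ y ∈ (U i)ᶜ, dist x y ≤ ((2 * K : ℕ) : ℝ)} := by
        rw [Set.mem_iInter]
        intro i
        obtain ⟨z, hz, hdz⟩ := hxU i
        refine ⟨z, hz, ?_⟩
        have h1 : (k i : ℝ) ≤ (m : ℝ) := by exact_mod_cast hkm i
        have h2 : (m : ℝ) ≤ (K : ℝ) := by exact_mod_cast hmK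
        push_cast
        rw [← hKc] at *
        linarith
      exact hρ (2 * K) hx2K
    · -- contradiction case
      exfalso
      push_neg at hmK
      have hKm : (K : ℝ) ≤ (m : ℝ) := by exact_mod_cast hmK.le
      have hx2m : x ∈ ⋂ i, {x : X | ∃ y ∈ (U i)ᶜ, dist x y ≤ ((2 * m : ℕ) : ℝ)} := by
        rw [Set.mem_iInter]
        intro i
        obtain ⟨z, hz, hdz⟩ := hxU i
        refine ⟨z, hz, ?_⟩
        have h1 : (k i : ℝ) ≤ (m : ℝ) := by exact_mod_cast hkm i
        push_cast
        linarith
      have hxρ : dist x p ≤ ρ (2 * m) := hρ (2 * m) hx2m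
      have hm0 : 0 < m := Nat.lt_of_le_of_lt (Nat.zero_le _) hmK
      have hmeq : m - 1 + 1 = m := Nat.succ_pred_eq_of_pos hm0
      have hsr := stmt9Seq_succ_ge_right ρ (m - 1)
      rw [hmeq, ← hs] at hsr
      have hcast : ((m - 1 : ℕ) : ℝ) + 1 = (m : ℝ) := by exact_mod_cast hmeq
      rw [hcast] at hsr
      linarith
  · -- V i coarsely disjoint from (U i)ᶜ
    intro i R hR
    set K : ℕ := ⌊2 * R⌋₊ + 1 with hK
    have hRK : 2 * R < (K : ℝ) := by
      have := Nat.lt_floor_add_one (2 * R)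
      push_cast [hK]
      linarith
    apply Bornology.IsBounded.subset (Metric.isBounded_closedBall (x := p) (r := R + s K))
    rintro x ⟨⟨v, hv, hxv⟩, ⟨z, hz, hxz⟩⟩
    have hvz : dist v z ≤ 2 * R := by
      have := dist_triangle v x z
      rw [dist_comm x v] at hxv
      linarith
    have hvp : dist v p < s K := by
      by_contra h
      push_neg at h
      have := hv z hz K h
      linarith
    have : dist x p ≤ dist x v + dist v p := dist_triangle _ _ _
    simp only [Metric.mem_closedBall]
    linarith
end

section
/- Let X be a proper metric space and A ⊆ X a subset. Any element of the Higson algebra of A extends: if φ : A → ℝ is a bounded function satisfying the Higson condition on A, then there exists a bounded function φ̂ : X → ℝ satisfying the Higson condition on X with φ̂|_A = φ. (Concretely for X = ℤ with A = U ⊆ ℤ: given a bounded Higson function φ : U → ℝ, the piecewise-linear interpolation φ̄ : ℤ → ℝ defined by φ̄(z) = (φ(z₋)(z₊ − z) + φ(z₊)(z − z₋))/(z₊ − z₋) for z ∉ U, with z₋ and z₊ the nearest points of U below and above z, is a bounded Higson function extending φ.) -/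
/-- A bounded function is Higson if far out it has arbitrarily small variation over
entourages. -/
def Higson {Z : Type*} [MetricSpace Z] (ψ : Z → ℝ) : Prop :=
  (∃ C : ℝ, ∀ z, |ψ z| ≤ C) ∧
  ∀ R : ℝ, 0 ≤ R → ∀ ε : ℝ, 0 < ε → ∃ K : Set Z, Bornology.IsBounded K ∧
    ∀ x y : Z, dist x y ≤ R → ¬(x ∈ K ∧ y ∈ K) → |ψ x - ψ y| < ε

/-!
Extend `φ` by `x ↦ u x * φ (σ x)`, where `σ x ∈ A` is an almost nearest point and the cutoff
`u` equals `1` on `A` and vanishes at distance `2 * r x` from `A`. The radius `r` tends to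
infinity so slowly that, far out, `φ` is almost constant at scale `8 * r`, while `r` changes by
at most one between nearby points. Then for nearby far-away points one of which lies in the
support of `u`, the points of `A` selected for them are close to each other and far out, so
`φ ∘ σ` barely varies there, and `u` varies by `O(1 / r)`.
-/

open Metric Bornology Filter

section Higson

variable {Z : Type*} [MetricSpace Z]

lemma higson_const (c : ℝ) : Higson fun _ : Z => c :=
  ⟨⟨|c|, fun _ => le_rfl⟩, fun _ _ _ hε => ⟨∅, isBounded_empty, fun _ _ _ _ => by simpa using hε⟩⟩

lemma eventually_cobounded_forall_dist_le {P : Z → Prop} (h : ∀ᶠ x in cobounded Z, P x) (R : ℝ) :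
    ∀ᶠ x in cobounded Z, ∀ y, dist x y ≤ R → P y := by
  have hK : IsBounded (cthickening R {x | P x}ᶜ) := (isBounded_compl_iff.2 h).cthickening
  filter_upwards [isBounded_def.1 hK] with x hx y hxy
  by_contra hy
  exact hx (mem_cthickening_of_dist_le x y R _ hy hxy)

lemma higson_iff {ψ : Z → ℝ} : Higson ψ ↔ (∃ C, ∀ z, |ψ z| ≤ C) ∧
    ∀ R, 0 ≤ R → ∀ ε, 0 < ε → ∀ᶠ x in cobounded Z, ∀ y, dist x y ≤ R → |ψ x - ψ y| < ε := by
  refine and_congr_right fun _ => forall₄_congr fun R hR ε hε => ⟨?_, fun h => ?_⟩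
  · rintro ⟨K, hK, hKψ⟩
    filter_upwards [isBounded_def.1 hK] with x hx y hxy using hKψ x y hxy fun h => hx h.1
  · refine ⟨_, isBounded_compl_iff.2 h, fun x y hxy hxy' => ?_⟩
    by_cases hx : ∀ y, dist x y ≤ R → |ψ x - ψ y| < ε
    · exact hx y hxy
    · have hy : ∀ z, dist y z ≤ R → |ψ y - ψ z| < ε := by_contra fun hy => hxy' ⟨hx, hy⟩
      simpa only [abs_sub_comm] using hy x (by rwa [dist_comm])

lemma higson_mul_of_cutoff {u ψ : Z → ℝ} {C : ℝ} (hu : ∀ x, u x ∈ Set.Icc (0 : ℝ) 1)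
    (hψ : ∀ x, |ψ x| ≤ C)
    (h : ∀ R, 0 ≤ R → ∀ ε, 0 < ε → ∃ F ∈ cobounded Z, ∀ p ∈ F, ∀ q ∈ F, dist p q ≤ R →
      u q ≠ 0 → |u p - u q| < ε ∧ |ψ p - ψ q| < ε) :
    Higson fun x => u x * ψ x := by
  have hψ' x : |ψ x| ≤ |C| := (hψ x).trans (le_abs_self C)
  refine higson_iff.2 ⟨⟨|C|, fun x => ?_⟩, fun R hR ε hε => ?_⟩
  · rw [abs_mul, abs_of_nonneg (hu x).1]
    exact (mul_le_of_le_one_left (abs_nonneg _) (hu x).2).trans (hψ' x)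
  obtain ⟨F, hF, hFuψ⟩ := h R hR (ε / (|C| + 1)) (by positivity)
  have hsupp p q (hpq : dist p q ≤ R) (hp : p ∈ F) (hq : q ∈ F) (hq0 : u q ≠ 0) :
      |u p * ψ p - u q * ψ q| < ε := by
    obtain ⟨h1, h2⟩ := hFuψ p hp q hq hpq hq0
    calc |u p * ψ p - u q * ψ q| = |(u p - u q) * ψ p + u q * (ψ p - ψ q)| := by ring_nf
      _ ≤ |u p - u q| * |ψ p| + |u q| * |ψ p - ψ q| := by
          rw [← abs_mul, ← abs_mul]; exact abs_add_le _ _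
      _ < ε / (|C| + 1) * |C| + ε / (|C| + 1) := by
          rw [abs_of_nonneg (hu q).1]
          exact add_lt_add_of_le_of_lt (mul_le_mul h1.le (hψ' p) (abs_nonneg _) (by positivity))
            ((mul_le_of_le_one_left (abs_nonneg _) (hu q).2).trans_lt h2)
      _ = ε := by field_simp
  filter_upwards [hF, eventually_cobounded_forall_dist_le hF R] with x hx hxF y hxy
  by_cases hy0 : u y = 0
  · by_cases hx0 : u x = 0
    · simpa [hx0, hy0] using hε
    · rw [abs_sub_comm]; exact hsupp y x (by rwa [dist_comm]) (hxF y hxy) hx hx0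
  · exact hsupp x y hxy hx (hxF y hxy) hy0

end Higson

namespace SlowScale

/-- The gaps `threshold t (k + 1) - threshold t k ≥ k + 1` are what keep `index t` from jumping by
more than one over a fixed distance far out. -/
noncomputable def threshold (t : ℕ → ℝ) : ℕ → ℝ
  | 0 => t 0
  | k + 1 => max (threshold t k + k + 1) (t (k + 1))

variable {t : ℕ → ℝ} {s R : ℝ} {k : ℕ}

lemma le_threshold (t : ℕ → ℝ) : ∀ k, t k ≤ threshold t k
  | 0 => le_rfl
  | _ + 1 => le_max_right _ _

lemma threshold_add_le (t : ℕ → ℝ) (k : ℕ) : threshold t k + k + 1 ≤ threshold t (k + 1) :=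
  le_max_left _ _

lemma threshold_zero_add_le (t : ℕ → ℝ) : ∀ k : ℕ, threshold t 0 + k ≤ threshold t k
  | 0 => by simp
  | k + 1 => by push_cast; linarith [threshold_zero_add_le t k, threshold_add_le t k]

lemma monotone_threshold (t : ℕ → ℝ) : Monotone (threshold t) :=
  monotone_nat_of_le_succ fun k => by linarith [threshold_add_le t k, k.cast_nonneg (α := ℝ)]

lemma exists_lt_threshold (t : ℕ → ℝ) (s : ℝ) : ∃ k, s < threshold t (k + 1) := by
  obtain ⟨k, hk⟩ := exists_nat_gt (s - threshold t 0)
  exact ⟨k, by linarith [threshold_zero_add_le t (k + 1), (k.cast_le (α := ℝ)).2 k.le_succ]⟩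

open Classical in
noncomputable def index (t : ℕ → ℝ) (s : ℝ) : ℕ := Nat.find (exists_lt_threshold t s)

lemma index_le_iff : index t s ≤ k ↔ s < threshold t (k + 1) := by
  classical
  rw [index, Nat.find_le_iff]
  exact ⟨fun ⟨m, hm, h⟩ => h.trans_le (monotone_threshold t (by omega)), fun h => ⟨k, le_rfl, h⟩⟩

lemma monotone_index : Monotone (index t) := fun _ _ h =>
  index_le_iff.2 (h.trans_lt (index_le_iff.1 le_rfl))

lemma le_index (h : threshold t k ≤ s) : k ≤ index t s := by
  cases k with
  | zero => exact Nat.zero_le _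
  | succ k => exact Nat.succ_le_of_lt (lt_of_not_ge fun h' => (index_le_iff.1 h').not_ge h)

lemma threshold_index_le (h : threshold t 0 ≤ s) : threshold t (index t s) ≤ s := by
  rcases hk : index t s with _ | k
  · exact h
  · exact not_lt.1 fun hs => by have := index_le_iff.2 hs; omega

lemma index_add_le (hR : R ≤ index t s + 2) : index t (s + R) ≤ index t s + 1 := by
  refine index_le_iff.2 ?_
  have := threshold_add_le t (index t s + 1)
  push_cast at this
  linarith [index_le_iff.1 (le_refl (index t s))]

end SlowScale

open SlowScale in
theorem exists_slow_scale (t : ℕ → ℝ) :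
    ∃ n : ℝ → ℕ, Monotone n ∧ Tendsto n atTop atTop ∧
      (∀ R, ∀ᶠ s in atTop, n (s + R) ≤ n s + 1) ∧ ∀ᶠ s in atTop, t (n s) ≤ s := by
  have htop : Tendsto (index t) atTop atTop :=
    tendsto_atTop_atTop.2 fun k => ⟨threshold t k, fun _ => le_index⟩
  refine ⟨index t, monotone_index, htop, fun R => ?_, ?_⟩
  · filter_upwards [htop.eventually_ge_atTop ⌈R⌉₊] with s hs
    exact index_add_le (by linarith [Nat.le_ceil R, (Nat.cast_le (α := ℝ)).2 hs])
  · filter_upwards [eventually_ge_atTop (threshold t 0)] with s hs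
    exact (le_threshold t _).trans (threshold_index_le hs)

section Extension

variable {X : Type*} [MetricSpace X] (A : Set X)

lemma exists_near_retraction (hA : A.Nonempty) :
    ∃ σ : X → A, (∀ x, dist x (σ x : X) ≤ infDist x A + 1) ∧ ∀ a : A, σ a = a := by
  have h (x : X) : ∃ a : A, dist x a ≤ infDist x A + 1 ∧ (x ∈ A → (a : X) = x) := by
    by_cases hx : x ∈ A
    · exact ⟨⟨x, hx⟩, by simpa using add_nonneg infDist_nonneg zero_le_one, fun _ => rfl⟩
    · obtain ⟨y, hy, hxy⟩ := (infDist_lt_iff hA).1 (lt_add_one (infDist x A))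
      exact ⟨⟨y, hy⟩, hxy.le, fun h => absurd h hx⟩
  choose σ hσ hσA using h
  exact ⟨σ, hσ, fun a => Subtype.ext (hσA a a.2)⟩

noncomputable def cutoff (r : X → ℝ) (x : X) : ℝ := max (min (2 - infDist x A / r x) 1) 0

variable (r : X → ℝ)

lemma cutoff_mem_Icc (x : X) : cutoff A r x ∈ Set.Icc (0 : ℝ) 1 :=
  ⟨le_max_right _ _, max_le (min_le_right _ _) zero_le_one⟩

lemma cutoff_of_mem {x : X} (hx : x ∈ A) : cutoff A r x = 1 := by
  norm_num [cutoff, infDist_zero_of_mem hx]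

variable {A r}

lemma infDist_lt_of_cutoff_ne_zero {x : X} (hr : 0 < r x) (h : cutoff A r x ≠ 0) :
    infDist x A < 2 * r x := by
  by_contra! h'
  refine h (max_eq_right ((min_le_left _ _).trans ?_))
  rw [sub_nonpos, le_div_iff₀ hr]
  exact h'

lemma abs_cutoff_sub_cutoff_le {p q : X} {δ : ℝ} (hp : 0 < r p) (hq : 0 < r q)
    (hpq : |r p - r q| ≤ δ) (h : cutoff A r q ≠ 0) :
    |cutoff A r p - cutoff A r q| ≤ (dist p q + 2 * δ) / r p := by
  set dp := infDist p A
  set dq := infDist q A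
  have hdq : dq / r q < 2 := (div_lt_iff₀ hq).2 (infDist_lt_of_cutoff_ne_zero hq h)
  have hdq₀ : 0 ≤ dq / r q := div_nonneg infDist_nonneg hq.le
  have hclamp : |cutoff A r p - cutoff A r q| ≤ |(dq - dp) + dq / r q * (r p - r q)| / r p := by
    have : (dq - dp) + dq / r q * (r p - r q) = (dq / r q - dp / r p) * r p := by
      field_simp; ring
    rw [this, abs_mul, abs_of_pos hp, mul_div_cancel_right₀ _ hp.ne']
    refine (abs_max_sub_max_le_abs _ _ _).trans ((abs_min_sub_min_le_max _ _ _ _).trans ?_)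
    simp only [sub_self, abs_zero, sub_sub_sub_cancel_left]
    exact max_le (by rw [abs_sub_comm]) (abs_nonneg _)
  refine hclamp.trans (div_le_div_of_nonneg_right ?_ hp.le)
  calc |(dq - dp) + dq / r q * (r p - r q)| ≤ |dq - dp| + dq / r q * |r p - r q| := by
        grw [abs_add_le, abs_mul, abs_of_nonneg hdq₀]
    _ ≤ dist p q + 2 * δ := by
        gcongr
        rw [abs_sub_comm]
        simpa [Real.dist_eq] using (lipschitz_infDist_pt A).dist_le_mul p q

lemma abs_sub_comp_lt {φ : A → ℝ} {σ : X → A} (hσ : ∀ x, dist x (σ x : X) ≤ infDist x A + 1)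
    {p q x₀ : X} {ρ δ : ℝ} (hq : infDist q A < 2 * ρ) (hpq : dist p q + 1 ≤ 2 * ρ)
    (hφ : ∀ a b : A, dist (a : X) b ≤ 8 * ρ → dist q x₀ - 2 * ρ - 1 < dist (a : X) x₀ →
      |φ a - φ b| < δ) :
    |φ (σ p) - φ (σ q)| < δ := by
  have hσqp : dist (σ q : X) (σ p) ≤ 8 * ρ := by
    linarith [dist_triangle4 (σ q : X) q p (σ p), dist_comm (σ q : X) q, dist_comm q p, hσ p,
      hσ q, infDist_le_infDist_add_dist (s := A) (x := p) (y := q)]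
  have hσq : dist q x₀ - 2 * ρ - 1 < dist (σ q : X) x₀ := by
    linarith [dist_triangle q (σ q) x₀, hσ q]
  rw [abs_sub_comm]
  exact hφ _ _ hσqp hσq

/-- `r x` is the width of the collar around `A` on which the extension interpolates between `φ`
and `0` near `x`. The constants in `abs_sub_lt` are those `abs_sub_comp_lt` needs for a pair
`p, q` with `dist p q + 1 ≤ 2 * r q`. -/
structure IsAdaptedScale (φ : A → ℝ) (x₀ : X) (r : X → ℝ) : Prop where
  tendsto : Tendsto r (cobounded X) atTop
  le_add_one : ∀ R, ∀ᶠ p in cobounded X, ∀ q, dist p q ≤ R → r q ≤ r p + 1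
  abs_sub_lt : ∀ᶠ x in cobounded X, ∀ a b : A, dist (a : X) b ≤ 8 * r x →
    dist x x₀ - 2 * r x - 1 < dist (a : X) x₀ → |φ a - φ b| < 1 / r x

theorem IsAdaptedScale.higson_cutoff_mul {φ : A → ℝ} {x₀ : X} {σ : X → A}
    (hφ : Higson φ) (hσ : ∀ x, dist x (σ x : X) ≤ infDist x A + 1)
    (hr : IsAdaptedScale φ x₀ r) : Higson fun x => cutoff A r x * φ (σ x) := by
  obtain ⟨C, hC⟩ := hφ.1
  refine higson_mul_of_cutoff (cutoff_mem_Icc A r) (fun x => hC (σ x)) fun R hR ε hε => ?_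
  set N := (R + 2) / ε + R + 1
  have hN : (R + 2) / N < ε := by
    rw [div_lt_iff₀ (by positivity)]
    nlinarith [mul_div_cancel₀ (R + 2) hε.ne']
  refine ⟨_, (hr.tendsto.eventually_ge_atTop N).and ((hr.le_add_one R).and hr.abs_sub_lt), ?_⟩
  rintro p ⟨hpN, hp, -⟩ q ⟨hqN, hq, hqφ⟩ hpq hq0
  have hRN : R + 1 ≤ N := by linarith [div_nonneg (by linarith : 0 ≤ R + 2) hε.le]
  have hN₀ : 0 < N := by linarith
  have hrpq : |r p - r q| ≤ 1 :=
    abs_sub_le_iff.2 ⟨by linarith [hq p (by rwa [dist_comm])], by linarith [hp q hpq]⟩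
  have hdq := infDist_lt_of_cutoff_ne_zero (hN₀.trans_le hqN) hq0
  constructor
  · calc |cutoff A r p - cutoff A r q| ≤ (dist p q + 2 * 1) / r p :=
          abs_cutoff_sub_cutoff_le (hN₀.trans_le hpN) (hN₀.trans_le hqN) hrpq hq0
      _ ≤ (R + 2) / N := by gcongr; norm_num
      _ < ε := hN
  · calc |φ (σ p) - φ (σ q)| < 1 / r q := abs_sub_comp_lt hσ hdq (by linarith) hqφ
      _ ≤ (R + 2) / N := by gcongr; linarith
      _ < ε := hN

theorem Higson.exists_isAdaptedScale {φ : A → ℝ} (hφ : Higson φ) (a₀ : A) :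
    ∃ r, IsAdaptedScale φ (a₀ : X) r := by
  have hmod (k : ℕ) : ∃ T, ∀ a b : A, dist a b ≤ 8 * (k + 1) → T ≤ dist (a : X) a₀ →
      |φ a - φ b| < 1 / (k + 1) := by
    have := (higson_iff.1 hφ).2 (8 * (k + 1)) (by positivity) (1 / (k + 1)) (by positivity)
    rw [← comap_dist_right_atTop a₀, eventually_comap, eventually_atTop] at this
    obtain ⟨T, hT⟩ := this
    exact ⟨T, fun a b hab ha => hT _ ha a rfl b hab⟩
  choose t ht using hmod
  obtain ⟨n, hn_mono, hn_top, hn_slow, hn_t⟩ := exists_slow_scale fun k => t k + 2 * k + 3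
  have hdist := tendsto_dist_right_cobounded_atTop (a₀ : X)
  refine ⟨fun x => n (dist x a₀) + 1, ⟨?_, fun R => ?_, ?_⟩⟩
  · exact tendsto_atTop_add_const_right _ 1 (tendsto_natCast_atTop_atTop.comp (hn_top.comp hdist))
  · filter_upwards [hdist.eventually (hn_slow R)] with p hp q hpq
    have : dist q a₀ ≤ dist p a₀ + R := by linarith [dist_triangle_left q (a₀ : X) p]
    exact_mod_cast Nat.succ_le_succ ((hn_mono this).trans hp)
  · filter_upwards [hdist.eventually hn_t] with x hx a b hab ha
    exact ht _ a b hab (by linarith)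

end Extension

theorem stmt10_general {X : Type*} [MetricSpace X] (A : Set X)
    (φ : A → ℝ) (hφ : Higson φ) :
    ∃ φhat : X → ℝ, Higson φhat ∧ ∀ a : A, φhat a = φ a := by
  rcases A.eq_empty_or_nonempty with rfl | hA
  · exact ⟨fun _ => 0, higson_const 0, fun a => a.2.elim⟩
  obtain ⟨σ, hσ, hσA⟩ := exists_near_retraction A hA
  obtain ⟨r, hr⟩ := hφ.exists_isAdaptedScale ⟨hA.some, hA.some_mem⟩
  refine ⟨fun x => cutoff A r x * φ (σ x), hr.higson_cutoff_mul hφ hσ, fun a => ?_⟩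
  change cutoff A r a * φ (σ a) = φ a
  rw [cutoff_of_mem A r a.2, hσA, one_mul]

/-- On a proper metric space every bounded Higson function on a subset extends to a
bounded Higson function on the whole space. -/
theorem stmt10 {X : Type*} [MetricSpace X] [ProperSpace X] (A : Set X)
    (φ : A → ℝ) (hφ : Higson φ) :
    ∃ φhat : X → ℝ, Higson φhat ∧ ∀ a : A, φhat a = φ a :=
  stmt10_general A φ hφ
end

section
/- Let X be a metric space with basepoint x₀, let I = ℝ≥0 × ℝ≥0 with the ℓ¹ (Manhattan) metric, and let X ∗ I = {(x,(s,t)) ∈ X × I : d(x,x₀) = s + t} be the asymptotic product. Let π : X ∗ I → X be the projection to the first factor. If X ∗ I = A ⊔ B is a coarse disjoint union (A, B disjoint and Δ_R[A] ∩ Δ_R[B] bounded for all R ≥ 0), and moreover for every x ∈ X either ({x} × I) ∩ (X∗I) ⊆ A or ⊆ B, then π(A) and π(B) are disjoint and form a coarse disjoint union of X. -/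
/-- If the asymptotic product `X ∗ I ⊆ X × ℝ≥0²` decomposes as a coarse disjoint union
`A ⊔ B` which is fiberwise over `X` (each slice `{x} ∗ I` lies entirely in `A` or in `B`),
then the projections `π(A)`, `π(B)` are disjoint and form a coarse disjoint union of `X`. -/
theorem stmt15 {X : Type*} [MetricSpace X] (x0 : X)
    (W A B : Set (X × ℝ × ℝ))
    (hW : W = {p | 0 ≤ p.2.1 ∧ 0 ≤ p.2.2 ∧ dist p.1 x0 = p.2.1 + p.2.2})
    (hAW : A ⊆ W) (hBW : B ⊆ W) (hunion : A ∪ B = W) (hdisj : A ∩ B = ∅)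
    (hcd : ∀ R : ℝ, 0 ≤ R → Bornology.IsBounded
      ({p : X × ℝ × ℝ | ∃ q ∈ A, dist p.1 q.1 + |p.2.1 - q.2.1| + |p.2.2 - q.2.2| ≤ R} ∩
       {p : X × ℝ × ℝ | ∃ q ∈ B, dist p.1 q.1 + |p.2.1 - q.2.1| + |p.2.2 - q.2.2| ≤ R}))
    (hslice : ∀ x : X, (∀ p ∈ W, p.1 = x → p ∈ A) ∨ (∀ p ∈ W, p.1 = x → p ∈ B)) :
    (Prod.fst '' A) ∩ (Prod.fst '' B) = ∅ ∧
    ∀ R : ℝ, 0 ≤ R → Bornology.IsBounded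
      ({x : X | ∃ y ∈ Prod.fst '' A, dist x y ≤ R} ∩
       {x : X | ∃ y ∈ Prod.fst '' B, dist x y ≤ R}) := by
  -- lift of a point of X into W
  have hlift : ∀ x : X, (x, dist x x0, (0:ℝ)) ∈ W := by
    intro x
    rw [hW]
    exact ⟨dist_nonneg, le_refl 0, by simp⟩
  have hdisj' : ∀ p, p ∈ A → p ∈ B → False := by
    intro p hpA hpB
    have : p ∈ A ∩ B := ⟨hpA, hpB⟩
    rw [hdisj] at this
    exact this
  -- lifts of projections of A lie in A, same for B
  have hliftA : ∀ p ∈ A, (p.1, dist p.1 x0, (0:ℝ)) ∈ A := by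
    intro p hp
    rcases hslice p.1 with h | h
    · exact h _ (hlift p.1) rfl
    · exact absurd (h p (hAW hp) rfl) (fun hb => hdisj' p hp hb)
  have hliftB : ∀ p ∈ B, (p.1, dist p.1 x0, (0:ℝ)) ∈ B := by
    intro p hp
    rcases hslice p.1 with h | h
    · exact absurd (h p (hBW hp) rfl) (fun ha => hdisj' p ha hp)
    · exact h _ (hlift p.1) rfl
  constructor
  · ext x
    simp only [Set.mem_inter_iff, Set.mem_image, Set.mem_empty_iff_false, iff_false, not_and]
    rintro ⟨a, haA, rfl⟩ ⟨b, hbB, hba⟩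
    have hA := hliftA a haA
    have hB := hliftB b hbB
    rw [hba] at hB
    exact hdisj' _ hA hB
  · intro R hR
    have hbdd := hcd (2 * R) (by linarith)
    have himg := (LipschitzWith.prod_fst (α := X) (β := ℝ × ℝ)).isBounded_image hbdd
    refine himg.subset ?_
    rintro x ⟨⟨y, ⟨a, haA, rfl⟩, hya⟩, ⟨z, ⟨b, hbB, rfl⟩, hzb⟩⟩
    refine ⟨(x, dist x x0, 0), ⟨?_, ?_⟩, rfl⟩
    · -- close to a point of A: lift of a
      refine ⟨(a.1, dist a.1 x0, 0), hliftA a haA, ?_⟩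
      simp only [sub_zero, abs_zero]
      have h1 : |dist x x0 - dist a.1 x0| ≤ dist x a.1 := abs_dist_sub_le _ _ _
      have h2 : dist x a.1 ≤ R := hya
      linarith [abs_nonneg (dist x x0 - dist a.1 x0)]
    · refine ⟨(b.1, dist b.1 x0, 0), hliftB b hbB, ?_⟩
      simp only [sub_zero, abs_zero]
      have h1 : |dist x x0 - dist b.1 x0| ≤ dist x b.1 := abs_dist_sub_le _ _ _
      have h2 : dist x b.1 ≤ R := hzb
      linarith [abs_nonneg (dist x x0 - dist b.1 x0)]
end

section
/- For n ≥ 1 and i = 1,…,n define U_i⁺ = ℝ^{i−1} × ℝ≥0 × ℝ^{n−i} and U_i⁻ = ℝ^{i−1} × ℝ<0 × ℝ^{n−i} as subsets of ℝⁿ (with the Euclidean or ℓ∞ metric). Then the family (U_i⁺, U_i⁻)___{i=1,…,n} is a coarse cover of ℝⁿ: for every R ≥ 0, the set ⋂_{i=1}^n (Δ_R[(U_i⁺)ᶜ] ∩ Δ_R[(U_i⁻)ᶜ]) is contained in the ball of radius nR around the origin (in particular it is bounded). -/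
/-- The half-spaces `U_i⁺ = {x : xᵢ ≥ 0}` and `U_i⁻ = {x : xᵢ < 0}` form a coarse cover
of `ℝⁿ`: the intersection of the `R`-neighborhoods of their complements is contained in
the closed ball of radius `nR` around the origin, in particular it is bounded. -/
theorem stmt16 (n : ℕ) (hn : 1 ≤ n) (R : ℝ) (hR : 0 ≤ R) :
    (⋂ i : Fin n,
        ({x : Fin n → ℝ | ∃ y : Fin n → ℝ, y i < 0 ∧ dist x y ≤ R} ∩
         {x : Fin n → ℝ | ∃ y : Fin n → ℝ, 0 ≤ y i ∧ dist x y ≤ R}))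
      ⊆ Metric.closedBall (0 : Fin n → ℝ) (n * R) ∧
    Bornology.IsBounded (⋂ i : Fin n,
        ({x : Fin n → ℝ | ∃ y : Fin n → ℝ, y i < 0 ∧ dist x y ≤ R} ∩
         {x : Fin n → ℝ | ∃ y : Fin n → ℝ, 0 ≤ y i ∧ dist x y ≤ R})) := by
  have hnR : R ≤ (n : ℝ) * R := by
    nlinarith [(Nat.one_le_cast (α := ℝ)).mpr hn]
  have hsub : (⋂ i : Fin n,
        ({x : Fin n → ℝ | ∃ y : Fin n → ℝ, y i < 0 ∧ dist x y ≤ R} ∩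
         {x : Fin n → ℝ | ∃ y : Fin n → ℝ, 0 ≤ y i ∧ dist x y ≤ R}))
      ⊆ Metric.closedBall (0 : Fin n → ℝ) (n * R) := by
    intro x hx
    rw [Metric.mem_closedBall, dist_pi_le_iff (le_trans hR hnR)]
    intro i
    have hxi := Set.mem_iInter.mp hx i
    obtain ⟨⟨y, hy, hdy⟩, ⟨z, hz, hdz⟩⟩ := hxi
    have h1 : dist (x i) (y i) ≤ R := le_trans (dist_le_pi_dist x y i) hdy
    have h2 : dist (x i) (z i) ≤ R := le_trans (dist_le_pi_dist x z i) hdz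
    rw [Real.dist_eq] at h1 h2 ⊢
    simp only [Pi.zero_apply, sub_zero, abs_le]
    constructor
    · have := abs_le.mp h2
      linarith
    · have := abs_le.mp h1
      linarith
  exact ⟨hsub, (Metric.isBounded_closedBall).subset hsub⟩
end

section
/- Let X, Y be metric spaces, let ρ : X → ℕ be defined by ρ(x) = ⌊d(x,x₀)⌋ for a fixed basepoint x₀ ∈ X, and equip ℕ with the coarse structure in which E ⊆ ℕ × ℕ is an entourage iff for every subset E′ ⊆ E the projection of E′ to the first factor is finite exactly when the projection to the second factor is finite. Then: (1) ρ is coarsely uniform and coarsely proper with respect to this structure (images of metric entourages are entourages, preimages of finite sets are bounded); (2) any two coarse maps φ, ψ : X → ℕ (coarsely uniform and coarsely proper for this structure) are close, i.e., {(φ(x), ψ(x)) : x ∈ X} is an entourage. -/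
/-- The topological coarse structure on `ℕ` coming from the one-point compactification:
`E` is an entourage iff for every `E' ⊆ E` the first projection of `E'` is finite exactly
when the second projection is finite. -/
def StarEnt (E : Set (ℕ × ℕ)) : Prop :=
  ∀ E' ⊆ E, ((Prod.fst '' E').Finite ↔ (Prod.snd '' E').Finite)

/-- Coarse uniformness of a map `X → ℕ` with respect to this coarse structure. -/
def CUStar {X : Type*} [MetricSpace X] (f : X → ℕ) : Prop :=
  ∀ R : ℝ, 0 ≤ R → StarEnt {p : ℕ × ℕ | ∃ x y : X, dist x y ≤ R ∧ p.1 = f x ∧ p.2 = f y}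

/-- Coarse properness: preimages of finite sets are metrically bounded. -/
def CPStar {X : Type*} [MetricSpace X] (f : X → ℕ) : Prop :=
  ∀ F : Set ℕ, F.Finite → Bornology.IsBounded (f ⁻¹' F)

lemma starEnt_of_fibers {E : Set (ℕ × ℕ)}
    (h1 : ∀ n, {m | (n, m) ∈ E}.Finite)
    (h2 : ∀ m, {n | (n, m) ∈ E}.Finite) : StarEnt E := by
  intro E' hE'
  constructor
  · intro hf
    have hsub : E' ⊆ ⋃ n ∈ Prod.fst '' E', (fun m => (n, m)) '' {m | (n, m) ∈ E} := by
      rintro ⟨a, b⟩ hab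
      exact Set.mem_biUnion ⟨(a, b), hab, rfl⟩ ⟨b, hE' hab, rfl⟩
    exact ((hf.biUnion (fun n _ => (h1 n).image _)).subset hsub).image _
  · intro hf
    have hsub : E' ⊆ ⋃ m ∈ Prod.snd '' E', (fun n => (n, m)) '' {n | (n, m) ∈ E} := by
      rintro ⟨a, b⟩ hab
      exact Set.mem_biUnion ⟨(a, b), hab, rfl⟩ ⟨a, hE' hab, rfl⟩
    exact ((hf.biUnion (fun m _ => (h2 m).image _)).subset hsub).image _

lemma fiber1_finite {E : Set (ℕ × ℕ)} (hE : StarEnt E) (a : ℕ) :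
    {m | (a, m) ∈ E}.Finite := by
  have h := (hE {p ∈ E | p.1 = a} (Set.sep_subset _ _)).1
    ((Set.finite_singleton a).subset (by rintro n ⟨p, ⟨hp, hpa⟩, rfl⟩; exact hpa))
  exact h.subset (fun m hm => ⟨(a, m), ⟨hm, rfl⟩, rfl⟩)

lemma fiber2_finite {E : Set (ℕ × ℕ)} (hE : StarEnt E) (b : ℕ) :
    {n | (n, b) ∈ E}.Finite := by
  have h := (hE {p ∈ E | p.2 = b} (Set.sep_subset _ _)).2
    ((Set.finite_singleton b).subset (by rintro n ⟨p, ⟨hp, hpb⟩, rfl⟩; exact hpb))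
  exact h.subset (fun n hn => ⟨(n, b), ⟨hn, rfl⟩, rfl⟩)

/-- Images of bounded-fibered preimages: the set of values of `g` on `f ⁻¹' {n}` is finite. -/
lemma key_finite {X : Type*} [MetricSpace X] {f g : X → ℕ}
    (hgCU : CUStar g) (hfCP : CPStar f) (n : ℕ) :
    {m | ∃ x, f x = n ∧ g x = m}.Finite := by
  rcases Set.eq_empty_or_nonempty {m | ∃ x, f x = n ∧ g x = m} with h | ⟨m₀, x₁, hx₁, hm₀⟩
  · simp [h]
  · obtain ⟨R, hR⟩ := Metric.isBounded_iff.1 (hfCP {n} (Set.finite_singleton n))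
    set R' := max R 0 with hR'
    have hS := hgCU R' (le_max_right _ _)
    refine (fiber1_finite hS (g x₁)).subset ?_
    rintro m ⟨x, hx, rfl⟩
    refine ⟨x₁, x, ?_, rfl, rfl⟩
    exact le_trans (hR (by simp [hx₁]) (by simp [hx])) (le_max_left _ _)

/-- (1) `ρ(x) = ⌊d(x,x₀)⌋` is a coarse map `X → ∗`; (2) any two coarse maps `X → ∗` are
close, i.e. `∗` is a final object. -/
theorem stmt18 {X : Type*} [MetricSpace X] (x0 : X) :
    (CUStar (fun x : X => ⌊dist x x0⌋₊) ∧ CPStar (fun x : X => ⌊dist x x0⌋₊)) ∧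
    (∀ φ ψ : X → ℕ, CUStar φ → CPStar φ → CUStar ψ → CPStar ψ →
      StarEnt {p : ℕ × ℕ | ∃ x : X, p = (φ x, ψ x)}) := by
  constructor
  · constructor
    · intro R hRnn
      apply starEnt_of_fibers
      · intro n
        refine (Set.finite_Iic ⌊R + n + 1⌋₊).subset ?_
        rintro m ⟨x, y, hd, hx, hy⟩
        have hdx : dist x x0 < n + 1 := by
          have := Nat.lt_floor_add_one (dist x x0)
          simpa [← hx] using this
        have hdy : dist y x0 ≤ R + n + 1 := by
          calc dist y x0 ≤ dist y x + dist x x0 := dist_triangle _ _ _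
          _ ≤ R + (n + 1) := by
              have := dist_comm x y ▸ hd
              linarith
          _ = R + n + 1 := by ring
        exact Set.mem_Iic.2 (le_trans hy.le (Nat.floor_le_floor hdy))
      · intro m
        refine (Set.finite_Iic ⌊R + m + 1⌋₊).subset ?_
        rintro n ⟨x, y, hd, hx, hy⟩
        have hdy : dist y x0 < m + 1 := by
          have := Nat.lt_floor_add_one (dist y x0)
          simpa [← hy] using this
        have hdx : dist x x0 ≤ R + m + 1 := by
          calc dist x x0 ≤ dist x y + dist y x0 := dist_triangle _ _ _
          _ ≤ R + (m + 1) := by linarith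
          _ = R + m + 1 := by ring
        exact Set.mem_Iic.2 (le_trans hx.le (Nat.floor_le_floor hdx))
    · intro F hF
      rcases F.eq_empty_or_nonempty with rfl | hne
      · simp
      · obtain ⟨N, hN⟩ := hF.bddAbove
        refine (Metric.isBounded_closedBall (x := x0) (r := N + 1)).subset ?_
        intro x hx
        have h1 : ⌊dist x x0⌋₊ ≤ N := hN hx
        have h2 : dist x x0 < ⌊dist x x0⌋₊ + 1 := Nat.lt_floor_add_one _
        have : dist x x0 ≤ N + 1 := by
          have : (⌊dist x x0⌋₊ : ℝ) ≤ N := by exact_mod_cast h1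
          linarith
        exact Metric.mem_closedBall.2 this
  · intro φ ψ hφCU hφCP hψCU hψCP
    apply starEnt_of_fibers
    · intro n
      refine (key_finite hψCU hφCP n).subset ?_
      rintro m ⟨x, hx⟩
      exact ⟨x, (Prod.mk.injEq _ _ _ _ ▸ hx).1.symm, (Prod.mk.injEq _ _ _ _ ▸ hx).2.symm⟩
    · intro m
      refine (key_finite hφCU hψCP m).subset ?_
      rintro n ⟨x, hx⟩
      exact ⟨x, (Prod.mk.injEq _ _ _ _ ▸ hx).2.symm, (Prod.mk.injEq _ _ _ _ ▸ hx).1.symm⟩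
end
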